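/- arXiv:2504.21806 — 3 statements merged into one kernel-verified Lean document; each statement's English description precedes it below -/
import Mathlib

section
/- Let (x,y) and (x',y') be orthonormal 2-frames of quaternions (so ‖x‖ = ‖y‖ = ‖x'‖ = ‖y'‖ = 1, Re(x * star y) = 0 and Re(x' * star y') = 0). If μ(x,y) = μ(x',y') and ν(x,y) = ν(x',y'), then there exists θ ∈ ℝ such that x' = cos θ • x + sin θ • y and y' = −sin θ • x + cos θ • y. -/
/-- `μ(x,y) = (1/2)(x * star y − y * star x)`. -/
noncomputable def qmu (x y : Quaternion ℝ) : Quaternion ℝ :=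
  ((1 : ℝ) / 2) • (x * star y - y * star x)

/-- `ν(x,y) = (1/2)(star x * y − star y * x)`. -/
noncomputable def qnu (x y : Quaternion ℝ) : Quaternion ℝ :=
  ((1 : ℝ) / 2) • (star x * y - star y * x)

/-!
If `Re (x * star y) = 0` then `y * star x = -(x * star y)`, so `μ(x,y) = x * star y` and
`ν(x,y) = star x * y`. Put `u = star x * y` (a unit imaginary quaternion) and `q = star x * x'`,
so that `y = x u` and `x' = x q`. The equality of `ν` gives `y' = x' u = x q u`, that of `μ` gives
`y' = y q = x u q`; hence `q` commutes with `u`. The centralizer of a nonzero imaginary `u` is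
`ℝ + ℝ u`, so the unit `q` is `cos θ + sin θ u`, and `u² = -1` turns `x' = x q`, `y' = x q u`
into the rotated frame.
-/

theorem Real.exists_cos_eq_sin_eq {c s : ℝ} (h : c ^ 2 + s ^ 2 = 1) :
    ∃ θ : ℝ, Real.cos θ = c ∧ Real.sin θ = s := by
  have hz : ‖(⟨c, s⟩ : ℂ)‖ = 1 := by
    rw [Complex.norm_eq_sqrt_sq_add_sq, h, Real.sqrt_one]
  obtain ⟨θ, hθ⟩ := (Complex.norm_eq_one_iff _).mp hz
  exact ⟨θ, by simpa using congrArg Complex.re hθ, by simpa using congrArg Complex.im hθ⟩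

namespace Quaternion

section CommRing

variable {R : Type*} [CommRing R]

theorem star_eq_neg_of_re_eq_zero {a : ℍ[R]} (h : a.re = 0) : star a = -a := by
  ext <;> simp [h]

theorem mul_star_swap_eq_neg {x y : ℍ[R]} (h : (x * star y).re = 0) :
    y * star x = -(x * star y) := by
  rw [← star_eq_neg_of_re_eq_zero h, star_mul, star_star]

theorem re_star_mul_eq_re_mul_star (x y : ℍ[R]) : (star x * y).re = (x * star y).re := by
  simp only [re_mul, re_star, imI_star, imJ_star, imK_star]
  ring

theorem normSq_coe_add_smul {u : ℍ[R]} (hu : u.re = 0) (c s : R) :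
    normSq ((c : ℍ[R]) + s • u) = c ^ 2 + s ^ 2 * normSq u := by
  simp only [normSq_add, normSq_coe, normSq_smul, star_smul, coe_mul_eq_smul, re_smul,
    re_star, hu, smul_zero, mul_zero]
  ring

end CommRing

theorem exists_eq_re_add_smul_of_commute {R : Type*} [Field R] [NeZero (2 : R)]
    {u q : ℍ[R]} (hu : u.re = 0) (hu0 : normSq u ≠ 0) (h : Commute q u) :
    ∃ s : R, q = q.re + s • u := by
  obtain ⟨-, hi, hj, hk⟩ := Quaternion.ext_iff.mp h.eq
  simp only [imI_mul, imJ_mul, imK_mul, hu] at hi hj hk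
  -- `q * u - u * q` is twice the cross product of the imaginary parts
  have ci : q.imJ * u.imK = q.imK * u.imJ :=
    mul_left_cancel₀ two_ne_zero (by linear_combination hi)
  have cj : q.imK * u.imI = q.imI * u.imK :=
    mul_left_cancel₀ two_ne_zero (by linear_combination hj)
  have ck : q.imI * u.imJ = q.imJ * u.imI :=
    mul_left_cancel₀ two_ne_zero (by linear_combination hk)
  refine ⟨(q.imI * u.imI + q.imJ * u.imJ + q.imK * u.imK) / normSq u, ?_⟩
  rw [normSq_def', hu] at hu0 ⊢
  ext
  · simp [hu]
  · simp only [imI_add, imI_coe, imI_smul, smul_eq_mul]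
    field_simp
    linear_combination u.imJ * ck - u.imK * cj
  · simp only [imJ_add, imJ_coe, imJ_smul, smul_eq_mul]
    field_simp
    linear_combination u.imK * ci - u.imI * ck
  · simp only [imK_add, imK_coe, imK_smul, smul_eq_mul]
    field_simp
    linear_combination u.imI * cj - u.imJ * ci

theorem mul_self_eq_neg_one {u : ℍ} (hu : u.re = 0) (hu1 : ‖u‖ = 1) : u * u = -1 := by
  rw [← sq, sq_eq_neg_normSq.mpr hu, normSq_eq_norm_mul_self, hu1, mul_one, coe_one]

theorem star_mul_self_of_norm_eq_one {x : ℍ} (hx : ‖x‖ = 1) : star x * x = 1 := by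
  rw [star_mul_self, normSq_eq_norm_mul_self, hx, mul_one, coe_one]

theorem self_mul_star_of_norm_eq_one {x : ℍ} (hx : ‖x‖ = 1) : x * star x = 1 := by
  rw [self_mul_star, normSq_eq_norm_mul_self, hx, mul_one, coe_one]

theorem exists_eq_cos_add_sin_smul_of_commute {u q : ℍ} (hu : u.re = 0) (hu1 : ‖u‖ = 1)
    (hq : ‖q‖ = 1) (h : Commute q u) :
    ∃ θ : ℝ, q = ↑(Real.cos θ) + Real.sin θ • u := by
  have hnu : normSq u = 1 := by rw [normSq_eq_norm_mul_self, hu1, mul_one]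
  obtain ⟨s, hs⟩ := exists_eq_re_add_smul_of_commute hu (by simp [hnu]) h
  have hcs : q.re ^ 2 + s ^ 2 = 1 := by
    have := normSq_eq_norm_mul_self q
    rwa [hq, mul_one, hs, normSq_coe_add_smul hu, hnu, mul_one] at this
  obtain ⟨θ, hcos, hsin⟩ := Real.exists_cos_eq_sin_eq hcs
  exact ⟨θ, by rw [hcos, hsin, ← hs]⟩

end Quaternion

open Quaternion

theorem qmu_eq_mul_star {x y : Quaternion ℝ} (h : (x * star y).re = 0) :
    qmu x y = x * star y := by
  rw [qmu, mul_star_swap_eq_neg h, sub_neg_eq_add, ← two_smul ℝ, smul_smul]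
  norm_num

theorem qnu_eq_qmu_star (x y : Quaternion ℝ) : qnu x y = qmu (star x) (star y) := by
  simp only [qnu, qmu, star_star]

theorem qnu_eq_star_mul {x y : Quaternion ℝ} (h : (x * star y).re = 0) :
    qnu x y = star x * y := by
  have h' : (star x * star (star y)).re = 0 := by
    rw [star_star, re_star_mul_eq_re_mul_star, h]
  rw [qnu_eq_qmu_star, qmu_eq_mul_star h', star_star]

theorem stmt_5_general (x y x' y' : Quaternion ℝ)
    (hx : ‖x‖ = 1) (hy : ‖y‖ = 1) (hx' : ‖x'‖ = 1)
    (hxy : (x * star y).re = 0) (hxy' : (x' * star y').re = 0)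
    (hμ : qmu x y = qmu x' y') (hν : qnu x y = qnu x' y') :
    ∃ θ : ℝ, x' = Real.cos θ • x + Real.sin θ • y ∧
      y' = -Real.sin θ • x + Real.cos θ • y := by
  rw [qmu_eq_mul_star hxy, qmu_eq_mul_star hxy'] at hμ
  rw [qnu_eq_star_mul hxy, qnu_eq_star_mul hxy'] at hν
  obtain ⟨u, hu⟩ : ∃ u, u = star x * y := ⟨_, rfl⟩
  obtain ⟨q, hq⟩ : ∃ q, q = star x * x' := ⟨_, rfl⟩
  have hxu : x * u = y := by rw [hu, ← mul_assoc, self_mul_star_of_norm_eq_one hx, one_mul]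
  have hxq : x * q = x' := by rw [hq, ← mul_assoc, self_mul_star_of_norm_eq_one hx, one_mul]
  have hx'u : x' * u = y' := by
    rw [hu, hν, ← mul_assoc, self_mul_star_of_norm_eq_one hx', one_mul]
  have hyq : y * q = y' := by
    rw [hq, ← mul_assoc, mul_star_swap_eq_neg hxy, hμ, ← mul_star_swap_eq_neg hxy', mul_assoc,
      star_mul_self_of_norm_eq_one hx', mul_one]
  have hx0 : x ≠ 0 := norm_ne_zero_iff.mp (hx ▸ one_ne_zero)
  have hqu : Commute q u := mul_left_cancel₀ hx0 <| by
    rw [← mul_assoc, ← mul_assoc, hxq, hxu, hx'u, hyq]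
  have hure : u.re = 0 := by rw [hu, re_star_mul_eq_re_mul_star, hxy]
  have hu1 : ‖u‖ = 1 := by rw [hu, norm_mul, Quaternion.norm_star, hx, hy, one_mul]
  have hq1 : ‖q‖ = 1 := by rw [hq, norm_mul, Quaternion.norm_star, hx, hx', one_mul]
  obtain ⟨θ, hθ⟩ := exists_eq_cos_add_sin_smul_of_commute hure hu1 hq1 hqu
  refine ⟨θ, ?_, ?_⟩
  · rw [← hxq, hθ, mul_add, mul_coe_eq_smul, mul_smul_comm, hxu]
  · rw [← hx'u, ← hxq, hθ, mul_assoc, add_mul, smul_mul_assoc, mul_self_eq_neg_one hure hu1,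
      coe_mul_eq_smul, mul_add, mul_smul_comm, mul_smul_comm, hxu, mul_neg, mul_one]
    module

/-- Injectivity of `ξ = (μ,ν)` on the oriented Grassmannian: two orthonormal 2-frames with the
same values of `μ` and `ν` differ by a rotation of the frame. -/
theorem stmt_5 (x y x' y' : Quaternion ℝ)
    (hx : ‖x‖ = 1) (hy : ‖y‖ = 1) (hx' : ‖x'‖ = 1) (hy' : ‖y'‖ = 1)
    (hxy : (x * star y).re = 0) (hxy' : (x' * star y').re = 0)
    (hμ : qmu x y = qmu x' y') (hν : qnu x y = qnu x' y') :
    ∃ θ : ℝ, x' = Real.cos θ • x + Real.sin θ • y ∧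
      y' = -Real.sin θ • x + Real.cos θ • y :=
  stmt_5_general x y x' y' hx hy hx' hxy hxy' hμ hν
end

section
/- For every pair of purely imaginary unit quaternions p and q (i.e., ‖p‖ = ‖q‖ = 1 and Re(p) = Re(q) = 0), there exists an orthonormal 2-frame (x,y) of quaternions with μ(x,y) = p and ν(x,y) = q. -/
/-!
Any two purely imaginary unit quaternions `a`, `b` are conjugate by a unit quaternion: since
`a² = b² = -1`, every `w = c - b c a` satisfies `w a = b w`, and some such `w` is nonzero.
Given `p`, `q`, take a unit `x` with `x q = -p x` and put `y = x q`; then `μ(x, y) = -x q x̄ = p`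
and `ν(x, y) = (q - q̄)/2 = q`.
-/

theorem sub_mul_mul_mul_eq_mul_sub_mul_mul {R : Type*} [Ring R] {a b : R} (ha : a * a = -1)
    (hb : b * b = -1) (c : R) : (c - b * c * a) * a = b * (c - b * c * a) :=
  calc (c - b * c * a) * a = c * a - b * c * (a * a) := by noncomm_ring
    _ = b * c - b * b * c * a := by rw [ha, hb]; noncomm_ring
    _ = b * (c - b * c * a) := by noncomm_ring

open scoped Quaternion

namespace Quaternion

theorem mul_self_eq_neg_one_of_re_eq_zero {a : ℍ} (ha : ‖a‖ = 1) (ha0 : a.re = 0) :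
    a * a = -1 := by
  have h := self_mul_star a
  rw [star_eq_neg.mpr ha0, normSq_eq_norm_mul_self, ha, mul_one, coe_one, mul_neg] at h
  exact neg_eq_iff_eq_neg.mp h

theorem star_mul_self_eq_one_of_norm_eq_one {a : ℍ} (ha : ‖a‖ = 1) : star a * a = 1 := by
  rw [star_mul_self, normSq_eq_norm_mul_self, ha, mul_one, coe_one]

theorem self_mul_star_eq_one_of_norm_eq_one {a : ℍ} (ha : ‖a‖ = 1) : a * star a = 1 := by
  rw [self_mul_star, normSq_eq_norm_mul_self, ha, mul_one, coe_one]

theorem exists_sub_mul_mul_ne_zero {a : ℍ} (ha0 : a.re = 0) (b : ℍ) :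
    ∃ c : ℍ, c - b * c * a ≠ 0 := by
  by_contra! h
  let i : ℍ := ⟨0, 1, 0, 0⟩
  let j : ℍ := ⟨0, 0, 1, 0⟩
  let k : ℍ := ⟨0, 0, 0, 1⟩
  -- `∑ e x ē = 4 re x` over the basis `e = 1, i, j, k`, so the sum below is `4 - 4 (re a) b`
  have key : (1 - b * 1 * a) * star 1 + (i - b * i * a) * star i + (j - b * j * a) * star j
      + (k - b * k * a) * star k = ((4 : ℝ) : ℍ) := by
    ext <;> simp [ha0, re_mul, imI_mul, imJ_mul, imK_mul] <;> simp [i, j, k] <;> ring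
  simp only [h, zero_mul, add_zero] at key
  rw [← coe_zero, coe_inj] at key
  norm_num at key

theorem exists_norm_eq_one_mul_eq_mul {a b : ℍ} (ha : ‖a‖ = 1) (ha0 : a.re = 0)
    (hb : ‖b‖ = 1) (hb0 : b.re = 0) : ∃ x : ℍ, ‖x‖ = 1 ∧ x * a = b * x := by
  obtain ⟨c, hw⟩ := exists_sub_mul_mul_ne_zero ha0 b
  set w := c - b * c * a
  have hwa : w * a = b * w :=
    sub_mul_mul_mul_eq_mul_sub_mul_mul (mul_self_eq_neg_one_of_re_eq_zero ha ha0)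
      (mul_self_eq_neg_one_of_re_eq_zero hb hb0) c
  refine ⟨‖w‖⁻¹ • w, ?_, by rw [smul_mul_assoc, hwa, mul_smul_comm]⟩
  rw [norm_smul, norm_inv, norm_norm, inv_mul_cancel₀ (norm_ne_zero_iff.mpr hw)]

theorem mul_star_mul_right_of_re_eq_zero (x : ℍ) {q : ℍ} (hq0 : q.re = 0) :
    x * star (x * q) = -(x * q * star x) := by
  rw [star_mul, star_eq_neg.mpr hq0, neg_mul, mul_neg, mul_assoc]

end Quaternion

open Quaternion

theorem qmu_mul_right_of_re_eq_zero (x : ℍ) {q : ℍ} (hq0 : q.re = 0) :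
    qmu x (x * q) = -(x * q * star x) := by
  rw [qmu, mul_star_mul_right_of_re_eq_zero x hq0]
  module

theorem qnu_mul_right_of_re_eq_zero {x q : ℍ} (hx : ‖x‖ = 1) (hq0 : q.re = 0) :
    qnu x (x * q) = q := by
  rw [qnu, star_mul, star_eq_neg.mpr hq0, ← mul_assoc, star_mul_self_eq_one_of_norm_eq_one hx,
    one_mul, mul_assoc, star_mul_self_eq_one_of_norm_eq_one hx, mul_one]
  module

/-- Surjectivity of `ξ = (μ,ν)` from the Stiefel manifold `V₂(ℝ⁴)` onto `S² × S²`: every pair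
of purely imaginary unit quaternions is realized by an orthonormal 2-frame. -/
theorem stmt_6 (p q : Quaternion ℝ) (hp : ‖p‖ = 1) (hq : ‖q‖ = 1)
    (hp0 : p.re = 0) (hq0 : q.re = 0) :
    ∃ x y : Quaternion ℝ, ‖x‖ = 1 ∧ ‖y‖ = 1 ∧ (x * star y).re = 0 ∧
      qmu x y = p ∧ qnu x y = q := by
  obtain ⟨x, hx, hxq⟩ :=
    exists_norm_eq_one_mul_eq_mul (b := -p) hq hq0 (by rwa [norm_neg])
      (by rw [re_neg, hp0, neg_zero])
  have hconj : -(x * q * star x) = p := by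
    rw [hxq, mul_assoc, self_mul_star_eq_one_of_norm_eq_one hx, mul_one, neg_neg]
  refine ⟨x, x * q, hx, by rw [norm_mul, hx, hq, one_mul], ?_,
    (qmu_mul_right_of_re_eq_zero x hq0).trans hconj, qnu_mul_right_of_re_eq_zero hx hq0⟩
  rw [mul_star_mul_right_of_re_eq_zero x hq0, hconj, hp0]
end

section
/- For every 3×3 real matrix A with AᵀA = I and det A = 1 (i.e., A ∈ SO(3)), there exists a unit quaternion q such that for all real numbers a, b, c: q * (a•i + b•j + c•k) * star q = a'•i + b'•j + c'•k, where (a', b', c')ᵀ = A · (a, b, c)ᵀ. That is, every rotation of the purely imaginary quaternions is realized by conjugation by a unit quaternion. -/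
/-- The imaginary unit `i` of the quaternions. -/
def qi : Quaternion ℝ := ⟨0, 1, 0, 0⟩

/-- The imaginary unit `j` of the quaternions. -/
def qj : Quaternion ℝ := ⟨0, 0, 1, 0⟩

/-- The imaginary unit `k` of the quaternions. -/
def qk : Quaternion ℝ := ⟨0, 0, 0, 1⟩

/-!
By the Cartan–Dieudonné theorem every orthogonal map of `ℝ³` is a product of reflections. The
reflection in the plane orthogonal to a unit vector `u` acts on pure quaternions as
`x ↦ u x u = -(u x ū)`, so a product of reflections acts as `det φ` times conjugation by the
product of the corresponding unit quaternions. For a rotation the sign is `+1`.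
-/

open scoped RealInnerProductSpace
open Submodule

section Reflection

variable {E : Type*} [NormedAddCommGroup E] [InnerProductSpace ℝ E]

theorem reflection_orthogonal_singleton_apply_of_norm_eq_one {u : E} (hu : ‖u‖ = 1) (v : E) :
    reflection (ℝ ∙ u)ᗮ v = v - (2 * ⟪u, v⟫) • u := by
  rw [reflection_orthogonal_apply, reflection_singleton_apply, hu]
  simp [two_smul, mul_smul]

theorem det_reflection_orthogonal_singleton [FiniteDimensional ℝ E] {u : E} (hu : u ≠ 0) :
    LinearMap.det (reflection (ℝ ∙ u)ᗮ).toLinearMap = -1 := by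
  rw [det_reflection, orthogonal_orthogonal, finrank_span_singleton hu, pow_one]

theorem reflection_orthogonal_singleton_zero : reflection (ℝ ∙ (0 : E))ᗮ = 1 := by
  ext x
  simp [reflection_mem_subspace_eq_self]

end Reflection

noncomputable def pureQuaternion : EuclideanSpace ℝ (Fin 3) →ₗ[ℝ] Quaternion ℝ where
  toFun v := ⟨0, v 0, v 1, v 2⟩
  map_add' _ _ := Quaternion.ext _ _ (add_zero 0).symm rfl rfl rfl
  map_smul' c _ := Quaternion.ext _ _ (smul_zero c).symm rfl rfl rfl

section PureQuaternion

variable (u v : EuclideanSpace ℝ (Fin 3))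

@[simp] theorem pureQuaternion_re : (pureQuaternion v).re = 0 := rfl
@[simp] theorem pureQuaternion_imI : (pureQuaternion v).imI = v 0 := rfl
@[simp] theorem pureQuaternion_imJ : (pureQuaternion v).imJ = v 1 := rfl
@[simp] theorem pureQuaternion_imK : (pureQuaternion v).imK = v 2 := rfl

theorem pureQuaternion_toLp (w : Fin 3 → ℝ) :
    pureQuaternion (WithLp.toLp 2 w) = w 0 • qi + w 1 • qj + w 2 • qk := by
  -- `qi`, `qj`, `qk` are unfolded only once the projections are pushed onto them: `simp` cannot
  -- project out of a sum of structure literals.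
  ext <;> simp <;> simp [qi, qj, qk]

theorem star_pureQuaternion : star (pureQuaternion v) = -pureQuaternion v := by
  ext <;> simp

theorem norm_pureQuaternion : ‖pureQuaternion v‖ = ‖v‖ := by
  refine (sq_eq_sq₀ (norm_nonneg _) (norm_nonneg _)).1 ?_
  rw [sq, ← Quaternion.normSq_eq_norm_mul_self, EuclideanSpace.real_norm_sq_eq]
  simp [Quaternion.normSq_def', Fin.sum_univ_three]

theorem pureQuaternion_mul_mul_self :
    pureQuaternion u * pureQuaternion v * pureQuaternion u =
      ‖u‖ ^ 2 • pureQuaternion v - (2 * ⟪u, v⟫) • pureQuaternion u := by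
  rw [EuclideanSpace.real_norm_sq_eq]
  ext <;> simp [Fin.sum_univ_three, PiLp.inner_apply] <;> ring

end PureQuaternion

def signedConjugations :
    Submonoid (EuclideanSpace ℝ (Fin 3) ≃ₗᵢ[ℝ] EuclideanSpace ℝ (Fin 3)) where
  carrier := {φ | ∃ q : Quaternion ℝ, ‖q‖ = 1 ∧ ∀ v,
    pureQuaternion (φ v) = LinearMap.det φ.toLinearMap • (q * pureQuaternion v * star q)}
  one_mem' := ⟨1, norm_one, fun v => by simp [LinearIsometryEquiv.one_def]⟩
  mul_mem' := by
    rintro φ ψ ⟨p, hp, hφ⟩ ⟨q, hq, hψ⟩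
    refine ⟨p * q, by rw [norm_mul, hp, hq, one_mul], fun v => ?_⟩
    rw [LinearIsometryEquiv.coe_mul, Function.comp_apply, hφ, hψ, mul_smul_comm, smul_mul_assoc,
      smul_smul, star_mul, ← LinearMap.det_comp]
    simp only [mul_assoc]
    rfl

theorem reflection_mem_signedConjugations_of_norm_eq_one {u : EuclideanSpace ℝ (Fin 3)}
    (hu : ‖u‖ = 1) : reflection (ℝ ∙ u)ᗮ ∈ signedConjugations := by
  refine ⟨pureQuaternion u, by rw [norm_pureQuaternion, hu], fun v => ?_⟩
  have hu₀ : u ≠ 0 := norm_ne_zero_iff.1 (hu ▸ one_ne_zero)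
  rw [det_reflection_orthogonal_singleton hu₀,
    reflection_orthogonal_singleton_apply_of_norm_eq_one hu, map_sub, map_smul,
    star_pureQuaternion, mul_neg, neg_one_smul, neg_neg, pureQuaternion_mul_mul_self, hu, one_pow,
    one_smul]

theorem reflection_mem_signedConjugations (v : EuclideanSpace ℝ (Fin 3)) :
    reflection (ℝ ∙ v)ᗮ ∈ signedConjugations := by
  rcases eq_or_ne v 0 with rfl | hv
  · rw [reflection_orthogonal_singleton_zero]
    exact signedConjugations.one_mem
  · have hunit : IsUnit ‖v‖⁻¹ := (inv_ne_zero (norm_ne_zero_iff.2 hv)).isUnit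
    have hu : ‖‖v‖⁻¹ • v‖ = 1 := by simpa using norm_smul_inv_norm (𝕜 := ℝ) hv
    have h := reflection_mem_signedConjugations_of_norm_eq_one hu
    simpa only [span_singleton_smul_eq hunit v] using h

theorem signedConjugations_eq_top : signedConjugations = ⊤ := by
  refine (Submonoid.eq_top_iff' _).2 fun φ => ?_
  obtain ⟨l, -, rfl⟩ := φ.reflections_generate_dim
  exact signedConjugations.list_prod_mem fun ψ hψ => by
    obtain ⟨v, -, rfl⟩ := List.mem_map.1 hψ
    exact reflection_mem_signedConjugations v

/-- Every `A ∈ SO(3)`, acting on the purely imaginary quaternions in the orthonormal basis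
`(i, j, k)`, is realized by conjugation by some unit quaternion `q`. -/
theorem stmt_9 (A : Matrix (Fin 3) (Fin 3) ℝ)
    (hA : A ∈ Matrix.specialOrthogonalGroup (Fin 3) ℝ) :
    ∃ q : Quaternion ℝ, ‖q‖ = 1 ∧ ∀ a b c : ℝ,
      q * (a • qi + b • qj + c • qk) * star q =
        (A.mulVec ![a, b, c] 0) • qi + (A.mulVec ![a, b, c] 1) • qj +
          (A.mulVec ![a, b, c] 2) • qk := by
  let φ : EuclideanSpace ℝ (Fin 3) ≃ₗᵢ[ℝ] EuclideanSpace ℝ (Fin 3) :=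
    Unitary.linearIsometryEquiv ⟨Matrix.toEuclideanCLM (𝕜 := ℝ) A, Unitary.map_mem _ hA.1⟩
  have hdet : LinearMap.det φ.toLinearMap = 1 := hA.2 ▸ LinearMap.det_toLin _ A
  obtain ⟨q, hq, hφ⟩ : φ ∈ signedConjugations :=
    signedConjugations_eq_top ▸ Submonoid.mem_top φ
  refine ⟨q, hq, fun a b c => ?_⟩
  calc q * (a • qi + b • qj + c • qk) * star q
      = q * pureQuaternion (WithLp.toLp 2 ![a, b, c]) * star q := by
        rw [pureQuaternion_toLp]; rfl
    _ = pureQuaternion (φ (WithLp.toLp 2 ![a, b, c])) := by rw [hφ, hdet, one_smul]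
    _ = _ := pureQuaternion_toLp _
end
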